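/- Let G be a countable amenable group acting on a compact metric space X with topological entropy zero, let φ : X → ℝ be a bounded function whose set D_φ of discontinuity points satisfies μ(D_φ) = 0 for every G-invariant Borel probability measure μ on X. Then for every x ∈ X the function f : G → ℝ, f(g) = φ(g(x)), is strongly deterministic: the shift-orbit closure of f in I^G (I the closure of the range of φ) has topological entropy zero. -/
import Mathlib


open scoped Classical Pointwise
open Filter MeasureTheory

variable {G : Type*} [Group G] [Countable G]

/-- A Følner sequence of finite nonempty subsets of `G`. -/
def IsFolner (F : ℕ → Finset G) : Prop :=
  (∀ n, (F n).Nonempty) ∧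
  ∀ K : Finset G, ∀ ε : ℝ, 0 < ε →
    ∀ᶠ n in atTop, ((symmDiff (K * F n) (F n)).card : ℝ) ≤ ε * ((F n).card : ℝ)

/-- An action of `G` on `X`: `τ 1 = id` and `τ (g*h) = τ g ∘ τ h`. -/
def IsGAction {X : Type*} (τ : G → X → X) : Prop :=
  (∀ x, τ 1 x = x) ∧ ∀ g h x, τ (g * h) x = τ g (τ h x)

/-- The Shannon entropy of the join `⋁_{g ∈ F} (τ g)⁻¹ P` of a finite partition `P`
with respect to `μ`. -/
noncomputable def partitionEntropy {X : Type*} [MeasurableSpace X] (μ : Measure X)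
    (τ : G → X → X) {ι : Type*} [Fintype ι] (P : ι → Set X) (F : Finset G) : ℝ :=
  ∑ c : {g // g ∈ F} → ι,
    Real.negMulLog ((μ {x | ∀ g : {g // g ∈ F}, τ g.1 x ∈ P (c g)}).toReal)

/-- Kolmogorov–Sinai entropy zero: for every finite measurable partition the infimum
over finite sets `F` of `H(μ, P^F)/|F|` is `0` (the "infimum rule" for dynamical
entropy of amenable (semi)group actions). -/
def KSEntropyZero {X : Type*} [MeasurableSpace X] (μ : Measure X) (τ : G → X → X) : Prop :=
  ∀ (ι : Type) [Fintype ι], ∀ P : ι → Set X,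
    (∀ i, MeasurableSet (P i)) → (∀ x, ∃! i, x ∈ P i) →
    ∀ ε : ℝ, 0 < ε →
      ∃ F : Finset G, F.Nonempty ∧ partitionEntropy μ τ P F / (F.card : ℝ) < ε

/-- `μ` is invariant under the action `τ`. -/
def InvariantMeasure {X : Type*} [MeasurableSpace X] (μ : Measure X) (τ : G → X → X) : Prop :=
  ∀ g, Measure.map (τ g) μ = μ

/-- Topological entropy zero, via the variational principle: every invariant Borel
probability measure has Kolmogorov–Sinai entropy zero. -/
def TopEntropyZero {X : Type*} [MeasurableSpace X] (τ : G → X → X) : Prop :=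
  ∀ μ : Measure X, IsProbabilityMeasure μ → InvariantMeasure μ τ → KSEntropyZero μ τ

/-- The shift action of `G` on `ℝ^G`: `(g·x)(h) = x(hg)`. -/
def shift (g : G) (x : G → ℝ) : G → ℝ := fun h => x (h * g)

/-- `f : G → ℝ` is strongly deterministic if it arises as `f(g) = φ(g(x₀))` for a
continuous `φ` and a point `x₀` in a topological dynamical system of topological
entropy zero on a compact metric space. -/
def StronglyDeterministic (f : G → ℝ) : Prop :=
  ∃ (X : Type) (mX : MetricSpace X),
    letI := mX
    letI : MeasurableSpace X := borel X
    CompactSpace X ∧ ∃ τ : G → X → X,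
      IsGAction τ ∧ (∀ g : G, Continuous (τ g)) ∧ TopEntropyZero τ ∧
      ∃ (φ : X → ℝ) (x₀ : X), Continuous φ ∧ ∀ g : G, f g = φ (τ g x₀)

/-- `f` is `𝓕`-quasi-generic for `μ`: `μ` is a weak* accumulation point of the Cesàro
averages `(1/|𝓕_n|) Σ_{g ∈ 𝓕_n} δ_{g(f)}`. -/
def QuasiGeneric (𝓕 : ℕ → Finset G) (f : G → ℝ) (μ : Measure (G → ℝ)) : Prop :=
  ∃ φ : ℕ → ℕ, StrictMono φ ∧
    ∀ T : (G → ℝ) → ℝ, Continuous T → (∃ C, ∀ y, |T y| ≤ C) →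
      Tendsto (fun k => (∑ g ∈ 𝓕 (φ k), T (shift g f)) / ((𝓕 (φ k)).card : ℝ)) atTop
        (nhds (∫ y, T y ∂μ))

/-- `f` is `𝓕`-deterministic: every shift-invariant probability measure for which `f`
is `𝓕`-quasi-generic has Kolmogorov–Sinai entropy zero. -/
def FDeterministic (𝓕 : ℕ → Finset G) (f : G → ℝ) : Prop :=
  ∀ μ : Measure (G → ℝ), IsProbabilityMeasure μ →
    (∀ g : G, Measure.map (shift g) μ = μ) →
    QuasiGeneric 𝓕 f μ → KSEntropyZero μ shift

/-- The orbit closure of `f` under the shift has topological entropy zero (variational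
principle formulation: every shift-invariant probability measure carried by the orbit
closure has Kolmogorov–Sinai entropy zero). -/
def OrbitClosureEntropyZero (f : G → ℝ) : Prop :=
  ∀ μ : Measure (G → ℝ), IsProbabilityMeasure μ →
    (∀ g : G, Measure.map (shift g) μ = μ) →
    μ (closure {y | ∃ g : G, y = shift g f}) = 1 →
    KSEntropyZero μ shift

private lemma eqOnClosure {α : Type*} [TopologicalSpace α] {S : Set α} {z : α}
    (hz : z ∈ closure S) {f h : α → ℝ} (hf : ContinuousAt f z) (hh : ContinuousAt h z)
    (heq : ∀ w ∈ S, f w = h w) : f z = h z := by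
  have hne : (nhdsWithin z S).NeBot := mem_closure_iff_nhdsWithin_neBot.1 hz
  have t1 : Tendsto f (nhdsWithin z S) (nhds (f z)) := hf.continuousWithinAt
  have t2 : Tendsto h (nhdsWithin z S) (nhds (h z)) := hh.continuousWithinAt
  exact tendsto_nhds_unique (Tendsto.congr' (eventually_nhdsWithin_of_forall heq) t1) t2

private lemma measEqOfDiff {α : Type*} [MeasurableSpace α] (μ : Measure α) {A B N : Set α}
    (hN : μ N = 0) (h : A \ N = B \ N) : μ A = μ B := by
  rw [← measure_diff_null (s := A) hN, h, measure_diff_null hN]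

/-- If a countable amenable group acts with topological entropy zero on
a compact metric space `X` and `φ : X → ℝ` is bounded with `μ(D_φ) = 0` for every
invariant probability measure (where `D_φ` is the set of discontinuity points), then for
every `x₀ ∈ X` the function `g ↦ φ(g(x₀))` is strongly deterministic. -/
theorem stmt7 {X : Type} [MetricSpace X] [CompactSpace X] [MeasurableSpace X] [BorelSpace X]
    (τ : G → X → X) (hact : IsGAction τ) (hcont : ∀ g : G, Continuous (τ g))
    (hzero : TopEntropyZero τ)
    (φ : X → ℝ) (C : ℝ) (hb : ∀ x, |φ x| ≤ C)
    (hD : ∀ μ : Measure X, IsProbabilityMeasure μ → InvariantMeasure μ τ →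
      μ {x | ¬ ContinuousAt φ x} = 0)
    (x₀ : X) :
    StronglyDeterministic (fun g : G => φ (τ g x₀)) := by
  classical
  haveI : Encodable G := Encodable.ofCountable G
  let G' : Type := Set.range (Encodable.encode : G → ℕ)
  haveI : Countable G' := inferInstance
  haveI : Encodable G' := Encodable.ofCountable G'
  let e : G ≃ G' := Equiv.ofInjective _ Encodable.encode_injective
  letI : MetricSpace (G' → ℝ) := PiCountable.metricSpace
  let sig : G → (X × (G' → ℝ)) → (X × (G' → ℝ)) :=
    fun g z => (τ g z.1, fun h' => z.2 (e (e.symm h' * g)))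
  let z₀ : X × (G' → ℝ) := (x₀, fun h' => φ (τ (e.symm h') x₀))
  let S : Set (X × (G' → ℝ)) := Set.range fun g => sig g z₀
  have hsig_one : ∀ z, sig 1 z = z := by
    intro z
    refine Prod.ext (hact.1 z.1) (funext fun h' => ?_)
    simp [sig]
  have hsig_mul : ∀ g h z, sig (g * h) z = sig g (sig h z) := by
    intro g h z
    refine Prod.ext (hact.2 g h z.1) (funext fun k' => ?_)
    simp [sig, mul_assoc]
  have hsig_cont : ∀ g, Continuous (sig g) :=
    fun g => ((hcont g).comp continuous_fst).prodMk
      (continuous_pi fun h' => (continuous_apply _).comp continuous_snd)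
  have hz₀S : z₀ ∈ S := ⟨1, hsig_one z₀⟩
  have hSK : ∀ g z, z ∈ closure S → sig g z ∈ closure S := by
    intro g z hz
    have h1 : sig g '' S ⊆ S := by
      rintro _ ⟨_, ⟨h, rfl⟩, rfl⟩
      exact ⟨g * h, hsig_mul g h z₀⟩
    exact closure_mono h1
      (image_closure_subset_closure_image (hsig_cont g) (Set.mem_image_of_mem _ hz))
  have hsig_orbit : ∀ g h', (sig g z₀).2 h' = φ (τ (e.symm h' * g) x₀) := by
    intro g h'; simp [sig, z₀]
  have hKcomp : IsCompact (closure S) := by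
    have hC : IsCompact ((Set.univ : Set X) ×ˢ Set.pi Set.univ fun _ : G' => Set.Icc (-C) C) :=
      isCompact_univ.prod (isCompact_univ_pi fun _ => isCompact_Icc)
    have hsub : S ⊆ (Set.univ : Set X) ×ˢ Set.pi Set.univ fun _ : G' => Set.Icc (-C) C := by
      rintro _ ⟨g, rfl⟩
      refine ⟨Set.mem_univ _, fun h' _ => ?_⟩
      rw [hsig_orbit g h']
      exact Set.mem_Icc.2 (abs_le.1 (hb _))
    exact hC.of_isClosed_subset isClosed_closure (closure_minimal hsub hC.isClosed)
  have hKey : ∀ z ∈ closure S, ∀ g : G, ContinuousAt φ (τ g z.1) →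
      z.2 (e g) = φ (τ g z.1) := by
    intro z hz g hcg
    have hf : ContinuousAt (fun w : X × (G' → ℝ) => w.2 (e g)) z :=
      ((continuous_apply (e g)).comp continuous_snd).continuousAt
    have hh : ContinuousAt (fun w : X × (G' → ℝ) => φ (τ g w.1)) z :=
      ContinuousAt.comp hcg (((hcont g).comp continuous_fst).continuousAt)
    refine eqOnClosure hz hf hh ?_
    rintro _ ⟨h, rfl⟩
    show (sig h z₀).2 (e g) = φ (τ g (sig h z₀).1)
    have h1 : (sig h z₀).2 (e g) = φ (τ (g * h) x₀) := by
      rw [hsig_orbit h (e g)]; simp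
    have h2 : (sig h z₀).1 = τ h x₀ := rfl
    rw [h1, h2, ← hact.2]
  let Y := {z : X × (G' → ℝ) // z ∈ closure S}
  refine ⟨Y, inferInstance, ?_⟩
  letI : MeasurableSpace Y := borel Y
  haveI : BorelSpace Y := ⟨rfl⟩
  let T : G → Y → Y := fun g y => ⟨sig g y.1, hSK g y.1 y.2⟩
  have hTact : IsGAction T :=
    ⟨fun y => Subtype.ext (hsig_one y.1), fun g h y => Subtype.ext (hsig_mul g h y.1)⟩
  have hTcont : ∀ g, Continuous (T g) :=
    fun g => ((hsig_cont g).comp continuous_subtype_val).subtype_mk _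
  let y₀ : Y := ⟨z₀, subset_closure hz₀S⟩
  refine ⟨isCompact_iff_compactSpace.mp hKcomp, T, hTact, hTcont, ?_,
    fun y => y.1.2 (e 1), y₀, (continuous_apply (e 1)).comp
      (continuous_snd.comp continuous_subtype_val), fun g => ?_⟩
  · intro μ hμprob hμinv
    haveI := hμprob
    have hp : Measurable (fun y : Y => y.1.1) :=
      (continuous_fst.comp continuous_subtype_val).measurable
    set p : Y → X := fun y => y.1.1 with hpdef
    set ν : Measure X := Measure.map p μ with hνdef
    haveI hνprob : IsProbabilityMeasure ν := Measure.isProbabilityMeasure_map hp.aemeasurable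
    have hTmeas : ∀ g, Measurable (T g) := fun g => (hTcont g).measurable
    have hνinv : InvariantMeasure ν τ := by
      intro g
      have h1 : τ g ∘ p = p ∘ T g := rfl
      rw [hνdef, Measure.map_map (hcont g).measurable hp, h1,
        ← Measure.map_map hp (hTmeas g), hμinv g]
    have hDmeas : MeasurableSet {x : X | ¬ ContinuousAt φ x} :=
      (measurableSet_of_continuousAt φ).compl
    set Good : Set X := {x | ∀ g : G, ContinuousAt φ (τ g x)} with hGooddef
    have hGoodmeas : MeasurableSet Good := by
      have : Good = ⋂ g : G, τ g ⁻¹' {x | ContinuousAt φ x} := by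
        ext x; simp [hGooddef, Set.mem_iInter]
      rw [this]
      exact MeasurableSet.iInter fun g => (hcont g).measurable (measurableSet_of_continuousAt φ)
    have hGoodinv : ∀ g x, x ∈ Good → τ g x ∈ Good := by
      intro g x hx h
      have := hx (h * g)
      rwa [hact.2] at this
    have hνGood : ν Goodᶜ = 0 := by
      have hGc : Goodᶜ = ⋃ g : G, τ g ⁻¹' {x | ¬ ContinuousAt φ x} := by
        ext x; simp [hGooddef]
      rw [hGc]
      refine measure_iUnion_null fun g => ?_
      have h2 : ν (τ g ⁻¹' {x | ¬ ContinuousAt φ x})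
          = Measure.map (τ g) ν {x | ¬ ContinuousAt φ x} :=
        (Measure.map_apply (hcont g).measurable hDmeas).symm
      rw [h2, hνinv g]
      exact hD ν hνprob hνinv
    intro ι _inst P hPm hPpart ε hε
    obtain ⟨i₀, -, -⟩ := hPpart y₀
    set φ' : X → ℝ := Set.piecewise {x | ContinuousAt φ x} φ 0 with hφ'def
    have hφ'meas : Measurable φ' :=
      ContinuousOn.measurable_piecewise (fun x hx => hx.continuousWithinAt)
        continuousOn_const (measurableSet_of_continuousAt φ)
    have hφ'eq : ∀ x : X, ContinuousAt φ x → φ' x = φ x :=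
      fun x hx => Set.piecewise_eq_of_mem _ _ _ hx
    set Phi : X → X × (G' → ℝ) := fun x => (x, fun h' => φ' (τ (e.symm h') x)) with hPhidef
    have hPhimeas : Measurable Phi :=
      measurable_id.prodMk (measurable_pi_lambda _ fun h' =>
        hφ'meas.comp (hcont _).measurable)
    have hms := (Subtype.borelSpace (closure S : Set (X × (G' → ℝ)))).measurable_eq
    set P' : ι → Set (X × (G' → ℝ)) := fun i => Subtype.val '' P i with hP'def
    have hP'meas : ∀ i, MeasurableSet (P' i) := by
      intro i
      have hPi : MeasurableSet[Subtype.instMeasurableSpace] (P i) := by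
        rw [hms]; exact hPm i
      exact MeasurableSet.subtype_image isClosed_closure.measurableSet hPi
    set Q : ι → Set X := fun i =>
      {x | (x ∈ Good ∧ Phi x ∈ P' i) ∨ (i = i₀ ∧ ¬(x ∈ Good ∧ ∃ j, Phi x ∈ P' j))} with hQdef
    have hQmeas : ∀ i, MeasurableSet (Q i) := by
      intro i
      have hQi : Q i = (Good ∩ Phi ⁻¹' P' i) ∪
          (if i = i₀ then (Good ∩ ⋃ j, Phi ⁻¹' P' j)ᶜ else ∅) := by
        by_cases hi : i = i₀ <;> ext x <;>
          simp only [hQdef, hi, Set.mem_setOf_eq, Set.mem_union, Set.mem_inter_iff,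
            Set.mem_preimage, Set.mem_iUnion, Set.mem_compl_iff, Set.mem_empty_iff_false,
            if_pos, if_neg, ite_true, ite_false, not_false_iff, true_and, false_and,
            and_true, or_false, not_and, not_exists] <;> tauto
      rw [hQi]
      apply MeasurableSet.union (hGoodmeas.inter (hPhimeas (hP'meas i)))
      split
      · exact (hGoodmeas.inter (MeasurableSet.iUnion fun j => hPhimeas (hP'meas j))).compl
      · exact MeasurableSet.empty
    have hQpart : ∀ x, ∃! i, x ∈ Q i := by
      intro x
      by_cases hx : x ∈ Good ∧ ∃ j, Phi x ∈ P' j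
      · obtain ⟨hxg, j, w, hwP, hwv⟩ := hx
        obtain ⟨i₁, hi₁, huniq⟩ := hPpart w
        have hmem : ∀ i, Phi x ∈ P' i ↔ w ∈ P i := by
          intro i
          constructor
          · rintro ⟨w', hw', hv⟩
            rwa [Subtype.val_injective (hv.trans hwv.symm)] at hw'
          · intro h; exact ⟨w, h, hwv⟩
        refine ⟨i₁, Or.inl ⟨hxg, (hmem i₁).2 hi₁⟩, ?_⟩
        rintro i' (⟨-, hm⟩ | ⟨-, hn⟩)
        · exact huniq i' ((hmem i').1 hm)
        · exact absurd ⟨hxg, j, w, hwP, hwv⟩ hn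
      · refine ⟨i₀, Or.inr ⟨rfl, hx⟩, ?_⟩
        rintro i' (⟨hg, hm⟩ | ⟨hi, -⟩)
        · exact absurd ⟨hg, _, hm⟩ hx
        · exact hi
    obtain ⟨F, hFne, hFent⟩ := hzero ν hνprob hνinv ι Q hQmeas hQpart ε hε
    refine ⟨F, hFne, ?_⟩
    have hYQ : ∀ (y : Y), y.1.1 ∈ Good → ∀ (g : G) (i : ι),
        (τ g y.1.1 ∈ Q i ↔ T g y ∈ P i) := by
      intro y hy g i
      have hval : (T g y).1 = Phi (τ g y.1.1) := by
        refine Prod.ext rfl (funext fun h' => ?_)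
        have h1 : (sig g y.1).2 h' = y.1.2 (e (e.symm h' * g)) := rfl
        have h2 : y.1.2 (e (e.symm h' * g)) = φ (τ (e.symm h' * g) y.1.1) :=
          hKey y.1 y.2 _ (hy _)
        have h3 : ContinuousAt φ (τ (e.symm h') (τ g y.1.1)) := by
          rw [← hact.2]; exact hy _
        have h4 : φ' (τ (e.symm h') (τ g y.1.1)) = φ (τ (e.symm h' * g) y.1.1) := by
          rw [hφ'eq _ h3, hact.2]
        rw [h1, h2]
        exact h4.symm
      have hgood : τ g y.1.1 ∈ Good := hGoodinv g _ hy
      have hmem : ∀ i, Phi (τ g y.1.1) ∈ P' i ↔ T g y ∈ P i := by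
        intro i
        rw [← hval]
        exact Subtype.val_injective.mem_set_image
      have hex : ∃ j, Phi (τ g y.1.1) ∈ P' j := by
        obtain ⟨j, hj, -⟩ := hPpart (T g y)
        exact ⟨j, (hmem j).2 hj⟩
      constructor
      · rintro (⟨-, hm⟩ | ⟨-, hn⟩)
        · exact (hmem i).1 hm
        · exact absurd ⟨hgood, hex⟩ hn
      · intro h
        exact Or.inl ⟨hgood, (hmem i).2 h⟩
    have hcell : ∀ c : {g // g ∈ F} → ι,
        μ {y : Y | ∀ g : {g // g ∈ F}, T g.1 y ∈ P (c g)}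
          = ν {x : X | ∀ g : {g // g ∈ F}, τ g.1 x ∈ Q (c g)} := by
      intro c
      have hBmeas : MeasurableSet {x : X | ∀ g : {g // g ∈ F}, τ g.1 x ∈ Q (c g)} := by
        have hBi : {x : X | ∀ g : {g // g ∈ F}, τ g.1 x ∈ Q (c g)}
            = ⋂ g : {g // g ∈ F}, τ g.1 ⁻¹' Q (c g) := by ext x; simp
        rw [hBi]
        exact MeasurableSet.iInter fun g => (hcont _).measurable (hQmeas _)
      rw [hνdef, Measure.map_apply hp hBmeas]
      have hN : μ (p ⁻¹' Goodᶜ) = 0 := by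
        rw [← Measure.map_apply hp hGoodmeas.compl, ← hνdef]
        exact hνGood
      refine measEqOfDiff μ hN ?_
      ext y
      simp only [Set.mem_diff, Set.mem_preimage, Set.mem_compl_iff, not_not, Set.mem_setOf_eq]
      constructor
      · rintro ⟨hA, hg⟩
        exact ⟨fun g => (hYQ y hg g.1 (c g)).2 (hA g), hg⟩
      · rintro ⟨hB, hg⟩
        exact ⟨fun g => (hYQ y hg g.1 (c g)).1 (hB g), hg⟩
    have hEnt : partitionEntropy μ T P F = partitionEntropy ν τ Q F := by
      unfold partitionEntropy
      exact Finset.sum_congr rfl fun c _ => by rw [hcell c]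
    rw [hEnt]
    exact hFent
  · show φ (τ g x₀) = (sig g z₀).2 (e 1)
    rw [hsig_orbit g (e 1)]
    simp
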